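/- For every β ≥ 0 there is a constant C(β) such that for all n ≥ 1 and all x ∈ [0,1], ∑_{k=0}^n |k/n − x|^β · C(n,k) x^k (1−x)^{n−k} ≤ C(β) · Δ_n(x)^β. -/

import Mathlib

/-!
Exponential moments: for `|λ| ≤ 1` the binomial moment generating function satisfies
`∑ₖ exp (λ (k - n x)) p_{n,k}(x) ≤ exp (n λ² x (1 - x))`. Taking `λ = ±1 / (n Δ)` makes the
right-hand side at most `e`, and `|u|^N ≤ N! (eᵘ + e⁻ᵘ)` turns this into
`∑ₖ |k/n - x|^N p_{n,k}(x) ≤ 2e N! Δ^N`. For real `β ≥ 0` one interpolates with `N = ⌈β⌉`,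
using `r^β ≤ 1 + r^N` for `r = |k/n - x| / Δ`.
-/

noncomputable def Delta (n : ℕ) (x : ℝ) : ℝ :=
  max (Real.sqrt (x * (1 - x) / n)) (1 / n)

open Real Finset

section Interpolation

theorem rpow_le_one_add_pow {r β : ℝ} {N : ℕ} (hr : 0 ≤ r) (hβ : 0 ≤ β) (hβN : β ≤ N) :
    r ^ β ≤ 1 + r ^ N := by
  rcases le_or_gt r 1 with hr1 | hr1
  · linarith [rpow_le_one hr hr1 hβ, pow_nonneg hr N]
  · have := rpow_le_rpow_of_exponent_le hr1.le hβN
    rw [rpow_natCast] at this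
    linarith

theorem abs_rpow_le_add_mul_pow {t δ β : ℝ} {N : ℕ} (hδ : 0 < δ) (hβ : 0 ≤ β) (hβN : β ≤ N) :
    |t| ^ β ≤ δ ^ β + δ ^ β / δ ^ N * |t| ^ N := by
  have hr : 0 ≤ |t| / δ := div_nonneg (abs_nonneg t) hδ.le
  calc |t| ^ β = δ ^ β * (|t| / δ) ^ β := by
        rw [← mul_rpow hδ.le hr, mul_div_cancel₀ _ hδ.ne']
    _ ≤ δ ^ β * (1 + (|t| / δ) ^ N) :=
        mul_le_mul_of_nonneg_left (rpow_le_one_add_pow hr hβ hβN) (rpow_nonneg hδ.le β)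
    _ = δ ^ β + δ ^ β / δ ^ N * |t| ^ N := by rw [div_pow]; ring

theorem sum_abs_rpow_mul_le_of_sum_abs_pow_mul_le {ι : Type*} {s : Finset ι} {w t : ι → ℝ}
    (hw : ∀ i ∈ s, 0 ≤ w i) (hw_sum : ∑ i ∈ s, w i = 1) {δ β A : ℝ} {N : ℕ} (hδ : 0 < δ)
    (hβ : 0 ≤ β) (hβN : β ≤ N) (hmoment : ∑ i ∈ s, |t i| ^ N * w i ≤ A * δ ^ N) :
    ∑ i ∈ s, |t i| ^ β * w i ≤ (1 + A) * δ ^ β := by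
  have hc : 0 ≤ δ ^ β / δ ^ N := by positivity
  calc ∑ i ∈ s, |t i| ^ β * w i
      ≤ ∑ i ∈ s, (δ ^ β + δ ^ β / δ ^ N * |t i| ^ N) * w i :=
        sum_le_sum fun i hi =>
          mul_le_mul_of_nonneg_right (abs_rpow_le_add_mul_pow hδ hβ hβN) (hw i hi)
    _ = δ ^ β * ∑ i ∈ s, w i + δ ^ β / δ ^ N * ∑ i ∈ s, |t i| ^ N * w i := by
        simp only [add_mul, sum_add_distrib, mul_sum, mul_assoc]
    _ ≤ δ ^ β * 1 + δ ^ β / δ ^ N * (A * δ ^ N) := by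
        rw [hw_sum]; gcongr
    _ = (1 + A) * δ ^ β := by field_simp

end Interpolation

section ExponentialMoments

theorem exp_le_one_add_add_sq {u : ℝ} (hu : |u| ≤ 1) : exp u ≤ 1 + u + u ^ 2 := by
  linarith [(abs_le.1 (abs_exp_sub_one_sub_id_le hu)).2]

theorem abs_pow_le_factorial_mul_exp_add_exp (u : ℝ) (N : ℕ) :
    |u| ^ N ≤ N.factorial * (exp u + exp (-u)) := by
  have h := pow_div_factorial_le_exp _ (abs_nonneg u) N
  rw [div_le_iff₀ (by positivity)] at h
  have : exp |u| ≤ exp u + exp (-u) := by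
    rcases abs_cases u with ⟨hu, _⟩ | ⟨hu, _⟩ <;> rw [hu] <;> linarith [exp_pos u, exp_pos (-u)]
  nlinarith [Nat.factorial_pos N]

variable {x : ℝ}

theorem sum_bernstein_weight_eq_one (n : ℕ) (x : ℝ) :
    ∑ k ∈ range (n + 1), (n.choose k : ℝ) * x ^ k * (1 - x) ^ (n - k) = 1 := by
  simpa [bernsteinPolynomial, Polynomial.eval_finsetSum] using
    congrArg (Polynomial.eval x) (bernsteinPolynomial.sum ℝ n)

theorem bernstein_weight_nonneg (n k : ℕ) (hx : x ∈ Set.Icc (0 : ℝ) 1) :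
    0 ≤ (n.choose k : ℝ) * x ^ k * (1 - x) ^ (n - k) := by
  have : 0 ≤ 1 - x := sub_nonneg.2 hx.2
  have := hx.1
  positivity

theorem sum_exp_mul_bernstein (n : ℕ) (x l : ℝ) :
    ∑ k ∈ range (n + 1), exp (l * (k - n * x)) * ((n.choose k : ℝ) * x ^ k * (1 - x) ^ (n - k)) =
      (x * exp (l * (1 - x)) + (1 - x) * exp (-(l * x))) ^ n := by
  rw [add_pow]
  refine sum_congr rfl fun k hk => ?_
  have hkn : k ≤ n := Nat.lt_succ_iff.mp (mem_range.mp hk)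
  have : exp (l * (k - n * x)) = exp (l * (1 - x)) ^ k * exp (-(l * x)) ^ (n - k) := by
    rw [← exp_nat_mul, ← exp_nat_mul, ← exp_add, Nat.cast_sub hkn]
    ring_nf
  rw [this, mul_pow, mul_pow]
  ring

theorem bernoulli_mgf_le (hx : x ∈ Set.Icc (0 : ℝ) 1) {l : ℝ} (hl : |l| ≤ 1) :
    x * exp (l * (1 - x)) + (1 - x) * exp (-(l * x)) ≤ 1 + l ^ 2 * (x * (1 - x)) := by
  obtain ⟨hx0, hx1⟩ := hx
  have h₁ : exp (l * (1 - x)) ≤ 1 + l * (1 - x) + (l * (1 - x)) ^ 2 := by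
    refine exp_le_one_add_add_sq ?_
    rw [abs_mul, abs_of_nonneg (sub_nonneg.2 hx1)]
    nlinarith [abs_nonneg l]
  have h₂ : exp (-(l * x)) ≤ 1 + -(l * x) + (-(l * x)) ^ 2 := by
    refine exp_le_one_add_add_sq ?_
    rw [abs_neg, abs_mul, abs_of_nonneg hx0]
    nlinarith [abs_nonneg l]
  nlinarith [mul_le_mul_of_nonneg_left h₁ hx0, mul_le_mul_of_nonneg_left h₂ (sub_nonneg.2 hx1)]

theorem sum_exp_mul_bernstein_le (n : ℕ) (hx : x ∈ Set.Icc (0 : ℝ) 1) {l : ℝ} (hl : |l| ≤ 1) :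
    ∑ k ∈ range (n + 1), exp (l * (k - n * x)) * ((n.choose k : ℝ) * x ^ k * (1 - x) ^ (n - k)) ≤
      exp (n * (l ^ 2 * (x * (1 - x)))) := by
  have hbase : 0 ≤ x * exp (l * (1 - x)) + (1 - x) * exp (-(l * x)) := by
    have := hx.1; have := sub_nonneg.2 hx.2; positivity
  rw [sum_exp_mul_bernstein, exp_nat_mul]
  gcongr
  exact (bernoulli_mgf_le hx hl).trans (by linarith [add_one_le_exp (l ^ 2 * (x * (1 - x)))])

theorem sum_abs_sub_pow_mul_bernstein_le {n : ℕ} (hn : 1 ≤ n) (hx : x ∈ Set.Icc (0 : ℝ) 1)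
    {δ : ℝ} (hδn : 1 / n ≤ δ) (hδvar : x * (1 - x) / n ≤ δ ^ 2) (N : ℕ) :
    ∑ k ∈ range (n + 1), |(k : ℝ) / n - x| ^ N * ((n.choose k : ℝ) * x ^ k * (1 - x) ^ (n - k)) ≤
      2 * exp 1 * N.factorial * δ ^ N := by
  have hn0 : (0 : ℝ) < n := by exact_mod_cast hn
  have hδ : 0 < δ := (one_div_pos.2 hn0).trans_le hδn
  set l := 1 / (n * δ)
  have hl : |l| ≤ 1 := by
    rw [abs_of_pos (by positivity), div_le_one (by positivity)]
    rwa [div_le_iff₀' hn0] at hδn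
  have hvar : n * (l ^ 2 * (x * (1 - x))) ≤ 1 := by
    have : n * (l ^ 2 * (x * (1 - x))) = x * (1 - x) / n / δ ^ 2 := by
      simp only [l]; field_simp
    rw [this, div_le_one (by positivity)]
    exact hδvar
  have hmgf : ∀ l' : ℝ, |l'| = |l| → ∑ k ∈ range (n + 1),
      exp (l' * (k - n * x)) * ((n.choose k : ℝ) * x ^ k * (1 - x) ^ (n - k)) ≤ exp 1 := by
    intro l' hl'
    refine (sum_exp_mul_bernstein_le n hx (hl' ▸ hl)).trans (exp_le_exp.2 ?_)
    rwa [← sq_abs l', hl', sq_abs]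
  have hpoint : ∀ k : ℕ, |(k : ℝ) / n - x| ^ N ≤
      δ ^ N * (N.factorial * (exp (l * (k - n * x)) + exp (-l * (k - n * x)))) := by
    intro k
    have : (k : ℝ) / n - x = δ * (l * (k - n * x)) := by simp only [l]; field_simp
    rw [this, abs_mul, mul_pow, abs_of_pos hδ, neg_mul]
    gcongr
    exact abs_pow_le_factorial_mul_exp_add_exp _ N
  calc _ ≤ ∑ k ∈ range (n + 1), δ ^ N * (N.factorial * (exp (l * (k - n * x)) +
          exp (-l * (k - n * x)))) * ((n.choose k : ℝ) * x ^ k * (1 - x) ^ (n - k)) :=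
        sum_le_sum fun k _ => mul_le_mul_of_nonneg_right (hpoint k) (bernstein_weight_nonneg n k hx)
    _ = δ ^ N * N.factorial * (∑ k ∈ range (n + 1), exp (l * (k - n * x)) *
          ((n.choose k : ℝ) * x ^ k * (1 - x) ^ (n - k)) + ∑ k ∈ range (n + 1),
          exp (-l * (k - n * x)) * ((n.choose k : ℝ) * x ^ k * (1 - x) ^ (n - k))) := by
        rw [← sum_add_distrib, mul_sum]
        exact sum_congr rfl fun k _ => by ring
    _ ≤ δ ^ N * N.factorial * (exp 1 + exp 1) := by
        gcongr
        · exact hmgf l rfl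
        · exact hmgf (-l) (abs_neg l)
    _ = 2 * exp 1 * N.factorial * δ ^ N := by ring

end ExponentialMoments

theorem one_div_le_Delta (n : ℕ) (x : ℝ) : 1 / n ≤ Delta n x := le_max_right _ _

theorem div_le_Delta_sq {n : ℕ} {x : ℝ} (hx : x ∈ Set.Icc (0 : ℝ) 1) :
    x * (1 - x) / n ≤ Delta n x ^ 2 := by
  have : 0 ≤ x * (1 - x) / n := by
    have := hx.1; have := sub_nonneg.2 hx.2; positivity
  calc x * (1 - x) / n = √(x * (1 - x) / n) ^ 2 := (sq_sqrt this).symm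
    _ ≤ Delta n x ^ 2 := by gcongr; exact le_max_left _ _

theorem stmt_3 (β : ℝ) (hβ : 0 ≤ β) :
    ∃ C : ℝ, ∀ n : ℕ, 1 ≤ n → ∀ x ∈ Set.Icc (0:ℝ) 1,
      ∑ k ∈ Finset.range (n + 1),
        |(k : ℝ) / n - x| ^ β * ((n.choose k : ℝ) * x ^ k * (1 - x) ^ (n - k))
      ≤ C * Delta n x ^ β := by
  refine ⟨1 + 2 * exp 1 * (⌈β⌉₊).factorial, fun n hn x hx => ?_⟩
  have hΔ : 0 < Delta n x := (one_div_pos.2 (by exact_mod_cast hn)).trans_le (one_div_le_Delta n x)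
  exact sum_abs_rpow_mul_le_of_sum_abs_pow_mul_le (fun k _ => bernstein_weight_nonneg n k hx)
    (sum_bernstein_weight_eq_one n x) hΔ hβ (Nat.le_ceil β)
    (sum_abs_sub_pow_mul_bernstein_le hn hx (one_div_le_Delta n x) (div_le_Delta_sq hx) _)
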